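/- The Varshamov–Tenengolts code VT₀(ℓ) = { x ∈ {0,1}^ℓ : Σ_{i=1}^{ℓ} i·x_i ≡ 0 (mod ℓ+1) } can correct a single deletion: for any two distinct codewords x, y ∈ VT₀(ℓ), no binary string of length ℓ - 1 is a subsequence of both x and y. -/

import Mathlib

/-!
Inserting a bit `b` into a word `z` at position `p` raises the syndrome by `(p + 1) b` plus the
number of ones after the insertion point. Two one-bit extensions of `z`, one inserting `b` before a
segment `s`, the other inserting `c` right after it, therefore have syndromes congruent modulo
`|z| + 2` only if `(p + 1) b + w = (p + |s| + 1) c`, where `w` is the number of ones in `s`: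
both sides are smaller than the modulus.
This forces `b = c` and `s` to be a run of `b`s, and sliding `b` across a run of `b`s does not
change the word.
-/

/-- The VT syndrome `Σ_{i=1}^{ℓ} i·x_i` (1-based indices). -/
def vtSyndrome {ℓ : ℕ} (x : Fin ℓ → Bool) : ℕ :=
  ∑ i : Fin ℓ, (i.val + 1) * (x i).toNat

namespace VT

/-- `syndrome l = ∑ i, (i + 1) l[i]`: the bit at index `i` is counted once by each of the
suffixes starting at `0, …, i`. -/
def syndrome : List Bool → ℕ
  | [] => 0
  | a :: l => (a :: l).count true + syndrome l

theorem count_true_cons (a : Bool) (l : List Bool) :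
    (a :: l).count true = a.toNat + l.count true := by
  cases a <;> simp [add_comm]

theorem count_true_ofFn {n : ℕ} (x : Fin n → Bool) :
    (List.ofFn x).count true = ∑ i, (x i).toNat := by
  induction n with
  | zero => simp
  | succ n ih => rw [List.ofFn_succ, count_true_cons, ih, Fin.sum_univ_succ]

theorem vtSyndrome_eq_syndrome_ofFn {n : ℕ} (x : Fin n → Bool) :
    vtSyndrome x = syndrome (List.ofFn x) := by
  induction n with
  | zero => simp [vtSyndrome, syndrome]
  | succ n ih =>
    rw [List.ofFn_succ, syndrome, ← List.ofFn_succ, count_true_ofFn, ← ih, vtSyndrome,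
      vtSyndrome, Fin.sum_univ_succ, Fin.sum_univ_succ]
    simp only [Fin.val_succ, Fin.val_zero, add_mul, one_mul, Finset.sum_add_distrib]
    ring

theorem syndrome_append_cons (u v : List Bool) (b : Bool) :
    syndrome (u ++ b :: v) = syndrome (u ++ v) + (u.length + 1) * b.toNat + v.count true := by
  induction u with
  | nil => simp only [List.nil_append, syndrome, count_true_cons, List.length_nil]; ring
  | cons a u ih =>
    simp only [List.cons_append, syndrome, ih, List.count_append, count_true_cons, List.length_cons]
    ring

theorem exists_eq_append_cons_of_sublist {α : Type*} {z w : List α} (h : z.Sublist w)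
    (hl : w.length = z.length + 1) : ∃ u a v, z = u ++ v ∧ w = u ++ a :: v := by
  induction h with
  | slnil => simp at hl
  | @cons z w a h _ =>
    exact ⟨[], a, z, rfl, by rw [h.eq_of_length (by simpa using hl.symm)]; rfl⟩
  | @cons_cons z w a _ ih =>
    obtain ⟨u, b, v, rfl, rfl⟩ := ih (by simpa using hl)
    exact ⟨a :: u, b, v, rfl, rfl⟩

theorem eq_and_eq_replicate_of_mul_toNat_add_count_eq {b c : Bool} {s : List Bool} {k : ℕ}
    (h : (k + 1) * b.toNat + s.count true = (k + s.length + 1) * c.toNat) :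
    c = b ∧ s = List.replicate s.length b := by
  have hs := s.count_le_length (a := true)
  cases b <;> cases c <;> simp only [Bool.toNat_false, Bool.toNat_true] at h
  · simp_all [List.eq_replicate_iff, List.count_eq_zero]
  · omega
  · omega
  · have : s.count true = s.length := by omega
    simp_all [List.eq_replicate_iff, List.count_eq_length]

theorem append_cons_eq_of_syndrome_modEq {u s v : List Bool} {b c : Bool}
    (h : syndrome (u ++ b :: (s ++ v)) ≡ syndrome (u ++ s ++ c :: v)
      [MOD (u ++ s ++ v).length + 2]) :
    u ++ b :: (s ++ v) = u ++ s ++ c :: v := by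
  have h' : syndrome (u ++ s ++ v) + ((u.length + 1) * b.toNat + s.count true) + v.count true ≡
      syndrome (u ++ s ++ v) + (u.length + s.length + 1) * c.toNat + v.count true
      [MOD (u ++ s ++ v).length + 2] := by
    rw [syndrome_append_cons, syndrome_append_cons] at h
    convert h using 1 <;> simp only [List.append_assoc, List.count_append, List.length_append]; ring
  have hb := b.toNat_le
  have hc := c.toNat_le
  have hs := s.count_le_length (a := true)
  have heq := (Nat.ModEq.add_left_cancel' _ (Nat.ModEq.add_right_cancel' _ h')).eq_of_lt_of_lt
    (by simp only [List.length_append]; nlinarith) (by simp only [List.length_append]; nlinarith)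
  obtain ⟨rfl, hrep⟩ := eq_and_eq_replicate_of_mul_toNat_add_count_eq heq
  rw [List.append_assoc, hrep, ← List.cons_append, ← List.replicate_succ, List.replicate_succ',
    List.append_assoc, List.singleton_append]

theorem eq_of_sublist_of_syndrome_modEq {z w w' : List Bool} (hw : z.Sublist w)
    (hw' : z.Sublist w') (hl : w.length = z.length + 1) (hl' : w'.length = z.length + 1)
    (h : syndrome w ≡ syndrome w' [MOD z.length + 2]) : w = w' := by
  obtain ⟨u, b, v, rfl, rfl⟩ := exists_eq_append_cons_of_sublist hw hl
  obtain ⟨u', c, v', hz, rfl⟩ := exists_eq_append_cons_of_sublist hw' hl'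
  rcases List.append_eq_append_iff.mp hz with ⟨s, rfl, rfl⟩ | ⟨s, rfl, rfl⟩
  · exact append_cons_eq_of_syndrome_modEq (by simpa only [List.append_assoc] using h)
  · exact (append_cons_eq_of_syndrome_modEq (by simpa only [List.append_assoc] using h.symm)).symm

end VT

/-- The Varshamov–Tenengolts code
`VT₀(ℓ) = {x : Σ i·x_i ≡ 0 (mod ℓ+1)}` corrects a single deletion: distinct
codewords share no common subsequence of length `ℓ - 1`. -/
theorem vt_code_corrects_single_deletion (ℓ : ℕ) (x y : Fin ℓ → Bool)
    (hx : vtSyndrome x % (ℓ + 1) = 0) (hy : vtSyndrome y % (ℓ + 1) = 0)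
    (hxy : x ≠ y) :
    ¬ ∃ z : List Bool, z.length = ℓ - 1 ∧
      z.Sublist (List.ofFn x) ∧ z.Sublist (List.ofFn y) := by
  rintro ⟨z, hz, hzx, hzy⟩
  cases ℓ with
  | zero => exact hxy (Subsingleton.elim x y)
  | succ n =>
    rw [Nat.add_sub_cancel] at hz
    have hsyn : VT.syndrome (List.ofFn x) ≡ VT.syndrome (List.ofFn y) [MOD z.length + 2] := by
      rw [← VT.vtSyndrome_eq_syndrome_ofFn, ← VT.vtSyndrome_eq_syndrome_ofFn, hz]
      exact hx.trans hy.symm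
    exact hxy <| List.ofFn_injective <| VT.eq_of_sublist_of_syndrome_modEq hzx hzy
      (by simp [hz]) (by simp [hz]) hsyn
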